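/- (Load Increase) Let x ∈ B_f(d) minimize the cost C_a(x) = Σ_{r∈R} c_r(a_r + x_r)·x_r over B_f(d), let r* ∈ R, and let a' ∈ ℕ^R be given by a'_{r*} = a_{r*} + 1 and a'_r = a_r for r ≠ r*. Then there exists y ∈ B_f(d) that minimizes C_{a'}(y) = Σ_{r∈R} c_r(a'_r + y_r)·y_r over B_f(d) and satisfies H(x, y) ∈ {0, 2}; i.e., y is obtained from x by moving at most one unit from one resource to another. -/
import Mathlib


/-- `f : 2^R → ℕ` is submodular if `f (U ∪ V) + f (U ∩ V) ≤ f U + f V` for all `U, V ⊆ R`. -/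
def Submodular {R : Type*} [DecidableEq R] (f : Finset R → ℕ) : Prop :=
  ∀ U V : Finset R, f (U ∪ V) + f (U ∩ V) ≤ f U + f V

/-- An integral polymatroid rank function: submodular, monotone and normalized. -/
def IsPolymatroidRank {R : Type*} [DecidableEq R] (f : Finset R → ℕ) : Prop :=
  Submodular f ∧ (∀ U V : Finset R, U ⊆ V → f U ≤ f V) ∧ f ∅ = 0

/-- The integral polymatroid base polyhedron
`B_f(d) = { x ∈ ℕ^R : Σ_{r∈U} x_r ≤ f(U) ∀ U ⊆ R, Σ_{r∈R} x_r = d }`. -/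
def basePolyhedron {R : Type*} [Fintype R] [DecidableEq R] (f : Finset R → ℕ) (d : ℕ) :
    Set (R → ℕ) :=
  {x | (∀ U : Finset R, ∑ r ∈ U, x r ≤ f U) ∧ ∑ r, x r = d}

/-- `u`-truncated strong semi-convexity of `c : ℕ → ℕ`. -/
def TruncStronglySemiConvex (u : ℕ) (c : ℕ → ℕ) : Prop :=
  ∀ a b x y : ℕ, 1 ≤ x → x ≤ y → y ≤ u → a ≤ b →
    (c (a + x) : ℤ) * (x : ℤ) - (c (a + x - 1) : ℤ) * ((x : ℤ) - 1) ≤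
      (c (b + y) : ℤ) * (y : ℤ) - (c (b + y - 1) : ℤ) * ((y : ℤ) - 1)

/-- The Hamming distance `H(x, y) = Σ_{r∈R} |x_r − y_r|` of `x, y ∈ ℕ^R`. -/
def natHamming {R : Type*} [Fintype R] (x y : R → ℕ) : ℕ :=
  ∑ r, ((x r : ℤ) - (y r : ℤ)).natAbs

set_option linter.unusedSectionVars false
set_option linter.unreachableTactic false
set_option linter.unusedTactic false
set_option maxHeartbeats 1000000

/-- The marginal cost `c (a + k) · k − c (a + k − 1) · (k − 1)`. -/
def gi (c : ℕ → ℕ) (a k : ℕ) : ℤ :=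
  (c (a + k) : ℤ) * (k : ℤ) - (c (a + k - 1) : ℤ) * ((k : ℤ) - 1)

lemma ssc_gi {u : ℕ} {c : ℕ → ℕ} (h : TruncStronglySemiConvex u c) {a b k l : ℕ}
    (hk : 1 ≤ k) (hkl : k ≤ l) (hl : l ≤ u) (hab : a ≤ b) : gi c a k ≤ gi c b l := by
  unfold gi
  exact h a b k l hk hkl hl hab

lemma gi_succ (c : ℕ → ℕ) (a k : ℕ) :
    gi c a (k + 1) = (c (a + k + 1) : ℤ) * ((k : ℤ) + 1) - (c (a + k) : ℤ) * (k : ℤ) := by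
  unfold gi
  have h1 : a + (k + 1) - 1 = a + k := by omega
  have h2 : a + (k + 1) = a + k + 1 := by omega
  rw [h1, h2]
  push_cast
  ring

lemma gi_step {c : ℕ → ℕ} (hm : Monotone c) (a k : ℕ) (hk : 1 ≤ k) :
    gi c (a + 1) k ≤ gi c a (k + 1) := by
  obtain ⟨m, rfl⟩ : ∃ m, k = m + 1 := ⟨k - 1, by omega⟩
  rw [gi_succ, gi_succ]
  have h1 : a + 1 + m = a + (m + 1) := by omega
  rw [h1]
  have h3 : (c (a + (m + 1)) : ℤ) ≤ (c (a + (m + 1) + 1) : ℤ) := by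
    exact_mod_cast hm (by omega : a + (m + 1) ≤ a + (m + 1) + 1)
  push_cast
  nlinarith [h3]

section PolymatroidHelpers
variable {R : Type*} [Fintype R] [DecidableEq R]

/-- Move one unit from resource `s` to resource `r`. -/
def move (x : R → ℕ) (r s : R) : R → ℕ :=
  fun t => if t = r then x r + 1 else if t = s then x s - 1 else x t

lemma move_add {x : R → ℕ} {r s : R} (h : r ≠ s) (hs : 1 ≤ x s) (t : R) :
    move x r s t + (if t = s then 1 else 0) = x t + (if t = r then 1 else 0) := by
  unfold move
  by_cases h1 : t = r <;> by_cases h2 : t = s <;> simp_all <;> omega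

lemma sum_move {x : R → ℕ} {r s : R} (h : r ≠ s) (hs : 1 ≤ x s) (U : Finset R) :
    ∑ t ∈ U, move x r s t + (if s ∈ U then 1 else 0) =
      ∑ t ∈ U, x t + (if r ∈ U then 1 else 0) := by
  have := Finset.sum_congr (rfl : U = U) (fun t _ => move_add h hs t)
  rw [Finset.sum_add_distrib, Finset.sum_add_distrib] at this
  simpa [Finset.sum_ite_eq' U] using this

lemma sum_pair_split (F : R → ℕ) {r s : R} (h : r ≠ s) :
    ∑ t, F t = F r + F s + ∑ t ∈ (Finset.univ.erase r).erase s, F t := by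
  rw [← Finset.add_sum_erase _ F (Finset.mem_univ r),
    ← Finset.add_sum_erase _ F (Finset.mem_erase.mpr ⟨Ne.symm h, Finset.mem_univ s⟩)]
  ring

lemma tight_inter_union {f : Finset R → ℕ} {x : R → ℕ} (hsub : Submodular f)
    (hx : ∀ U : Finset R, ∑ t ∈ U, x t ≤ f U)
    {U V : Finset R} (hU : ∑ t ∈ U, x t = f U) (hV : ∑ t ∈ V, x t = f V) :
    (∑ t ∈ U ∩ V, x t = f (U ∩ V)) ∧ (∑ t ∈ U ∪ V, x t = f (U ∪ V)) := by
  have h1 := hx (U ∩ V)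
  have h2 := hx (U ∪ V)
  have h3 := hsub U V
  have h4 : ∑ t ∈ U ∪ V, x t + ∑ t ∈ U ∩ V, x t = ∑ t ∈ U, x t + ∑ t ∈ V, x t :=
    Finset.sum_union_inter
  omega

/-- Symmetric exchange property for integral polymatroid base polyhedra. -/
lemma exchange {f : Finset R → ℕ} (hf : IsPolymatroidRank f)
    {d : ℕ} {x y : R → ℕ} (hx : x ∈ basePolyhedron f d) (hy : y ∈ basePolyhedron f d)
    {r : R} (hr : x r < y r) :
    ∃ s, s ≠ r ∧ y s < x s ∧ move x r s ∈ basePolyhedron f d ∧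
      move y s r ∈ basePolyhedron f d := by
  classical
  obtain ⟨hsub, hmon, h0⟩ := hf
  obtain ⟨hxle, hxsum⟩ := hx
  obtain ⟨hyle, hysum⟩ := hy
  -- maximal y-tight set avoiding r
  set F : Finset (Finset R) :=
    Finset.univ.filter (fun U => (∑ t ∈ U, y t = f U) ∧ r ∉ U) with hF
  have hFne : F.Nonempty := ⟨∅, by simp [hF, h0]⟩
  obtain ⟨V, hVF, hVmax⟩ := F.exists_max_image Finset.card hFne
  rw [hF, Finset.mem_filter] at hVF
  have hVt : ∑ t ∈ V, y t = f V := hVF.2.1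
  have hrV : r ∉ V := hVF.2.2
  have hVsup : ∀ U : Finset R, (∑ t ∈ U, y t = f U) → r ∉ U → U ⊆ V := by
    intro U hUt hUr
    have hUV : ∑ t ∈ U ∪ V, y t = f (U ∪ V) := (tight_inter_union hsub hyle hUt hVt).2
    have hmem : U ∪ V ∈ F := by
      rw [hF, Finset.mem_filter]
      exact ⟨Finset.mem_univ _, hUV, by simp [hUr, hrV]⟩
    have hcard := hVmax _ hmem
    have heq : V = U ∪ V :=
      Finset.eq_of_subset_of_card_le Finset.subset_union_right hcard
    intro t ht
    rw [heq]
    exact Finset.mem_union_left _ ht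
  -- key claim: a good s exists
  have key : ∃ s, y s < x s ∧ (∀ U : Finset R, (∑ t ∈ U, x t = f U) → r ∈ U → s ∈ U) ∧
      s ∉ V := by
    set G : Finset (Finset R) :=
      Finset.univ.filter (fun U => (∑ t ∈ U, x t = f U) ∧ r ∈ U) with hG
    by_cases hGne : G.Nonempty
    · obtain ⟨D, hDG, hDmin⟩ := G.exists_min_image Finset.card hGne
      rw [hG, Finset.mem_filter] at hDG
      have hDt : ∑ t ∈ D, x t = f D := hDG.2.1
      have hrD : r ∈ D := hDG.2.2
      have hDsub : ∀ U : Finset R, (∑ t ∈ U, x t = f U) → r ∈ U → D ⊆ U := by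
        intro U hUt hUr
        have hDU : ∑ t ∈ D ∩ U, x t = f (D ∩ U) := (tight_inter_union hsub hxle hDt hUt).1
        have hmem : D ∩ U ∈ G := by
          rw [hG, Finset.mem_filter]
          exact ⟨Finset.mem_univ _, hDU, Finset.mem_inter.mpr ⟨hrD, hUr⟩⟩
        have hcard := hDmin _ hmem
        have heq : D ∩ U = D :=
          Finset.eq_of_subset_of_card_le Finset.inter_subset_left hcard
        intro t ht
        have : t ∈ D ∩ U := by rw [heq]; exact ht
        exact (Finset.mem_inter.mp this).2
      have hex : ∃ s ∈ D \ V, y s < x s := by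
        by_contra hno
        push_neg at hno
        have hrDV : r ∈ D \ V := Finset.mem_sdiff.mpr ⟨hrD, hrV⟩
        have h1 : ∑ t ∈ D \ V, x t < ∑ t ∈ D \ V, y t :=
          Finset.sum_lt_sum (fun i hi => le_of_not_gt (fun hlt => absurd hlt (by
            have := hno i hi; omega))) ⟨r, hrDV, hr⟩
        have h2 := hsub D V
        have h3 : ∑ t ∈ (D ∪ V) \ V, y t + ∑ t ∈ V, y t = ∑ t ∈ D ∪ V, y t :=
          Finset.sum_sdiff Finset.subset_union_right
        rw [Finset.union_sdiff_right] at h3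
        have h4 : ∑ t ∈ D \ (D ∩ V), x t + ∑ t ∈ D ∩ V, x t = ∑ t ∈ D, x t :=
          Finset.sum_sdiff Finset.inter_subset_left
        rw [Finset.sdiff_inter_self_left] at h4
        have h5 := hyle (D ∪ V)
        have h6 := hxle (D ∩ V)
        omega
      obtain ⟨s, hsDV, hsyx⟩ := hex
      rw [Finset.mem_sdiff] at hsDV
      exact ⟨s, hsyx, fun U hUt hUr => hDsub U hUt hUr hsDV.1, hsDV.2⟩
    · have hex : ∃ s ∈ Finset.univ \ V, y s < x s := by
        by_contra hno
        push_neg at hno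
        have hrDV : r ∈ Finset.univ \ V := Finset.mem_sdiff.mpr ⟨Finset.mem_univ r, hrV⟩
        have h1 : ∑ t ∈ Finset.univ \ V, x t < ∑ t ∈ Finset.univ \ V, y t :=
          Finset.sum_lt_sum (fun i hi => le_of_not_gt (fun hlt => absurd hlt (by
            have := hno i hi; omega))) ⟨r, hrDV, hr⟩
        have h3 : ∑ t ∈ Finset.univ \ V, y t + ∑ t ∈ V, y t = ∑ t ∈ Finset.univ, y t :=
          Finset.sum_sdiff (Finset.subset_univ V)
        have h4 : ∑ t ∈ Finset.univ \ V, x t + ∑ t ∈ V, x t = ∑ t ∈ Finset.univ, x t :=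
          Finset.sum_sdiff (Finset.subset_univ V)
        have h5 := hxle V
        omega
      obtain ⟨s, hsDV, hsyx⟩ := hex
      rw [Finset.mem_sdiff] at hsDV
      refine ⟨s, hsyx, fun U hUt hUr => absurd ?_ hGne, hsDV.2⟩
      exact ⟨U, by rw [hG, Finset.mem_filter]; exact ⟨Finset.mem_univ _, hUt, hUr⟩⟩
  obtain ⟨s, hsyx, hsprop, hsV⟩ := key
  have hsr : s ≠ r := by
    intro h; rw [h] at hsyx; omega
  have h1x : 1 ≤ x s := by omega
  have h1y : 1 ≤ y r := by omega
  refine ⟨s, hsr, hsyx, ⟨?_, ?_⟩, ⟨?_, ?_⟩⟩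
  · intro U
    have hid := sum_move (Ne.symm hsr) h1x U
    have hle := hxle U
    by_cases hrU : r ∈ U <;> by_cases hsU : s ∈ U <;> simp [hrU, hsU] at hid
    · omega
    · have hnt : ∑ t ∈ U, x t ≠ f U := fun hUt => hsU (hsprop U hUt hrU)
      omega
    · omega
    · omega
  · have hid := sum_move (Ne.symm hsr) h1x Finset.univ
    simp at hid
    omega
  · intro U
    have hid := sum_move hsr h1y U
    have hle := hyle U
    by_cases hrU : r ∈ U <;> by_cases hsU : s ∈ U <;> simp [hrU, hsU] at hid
    · omega
    · omega
    · have hnt : ∑ t ∈ U, y t ≠ f U := fun hUt => hsV (hVsup U hUt hrU hsU)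
      omega
    · omega
  · have hid := sum_move hsr h1y Finset.univ
    simp at hid
    omega

lemma cost_move_diff (l : R → ℕ) (c : R → ℕ → ℕ) (z : R → ℕ) {r s : R} (h : r ≠ s)
    (hs : 1 ≤ z s) :
    ((∑ t, c t (l t + move z r s t) * move z r s t : ℕ) : ℤ) =
      ((∑ t, c t (l t + z t) * z t : ℕ) : ℤ)
        + gi (c r) (l r) (z r + 1) - gi (c s) (l s) (z s) := by
  have hmr : move z r s r = z r + 1 := by simp [move]
  have hms : move z r s s = z s - 1 := by simp [move, Ne.symm h]
  obtain ⟨m, hm⟩ : ∃ m, z s = m + 1 := ⟨z s - 1, by omega⟩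
  rw [sum_pair_split (fun t => c t (l t + move z r s t) * move z r s t) h,
    sum_pair_split (fun t => c t (l t + z t) * z t) h]
  have htail : ∑ t ∈ (Finset.univ.erase r).erase s,
      c t (l t + move z r s t) * move z r s t =
      ∑ t ∈ (Finset.univ.erase r).erase s, c t (l t + z t) * z t := by
    refine Finset.sum_congr rfl fun t ht => ?_
    rw [Finset.mem_erase, Finset.mem_erase] at ht
    simp [move, ht.1, ht.2.1]
  rw [htail, hmr, hms, hm]
  have e1 : m + 1 - 1 = m := by omega
  have e2 : l r + (z r + 1) = l r + z r + 1 := by omega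
  have e3 : l s + (m + 1) = l s + m + 1 := by omega
  rw [e1, e2, e3, gi_succ, gi_succ]
  push_cast
  ring

lemma ham_move {x y : R → ℕ} {r s : R} (h : r ≠ s) (hr : y r < x r) (hs : x s < y s) :
    natHamming x (move y r s) + 2 = natHamming x y := by
  unfold natHamming
  rw [sum_pair_split (fun t => ((x t : ℤ) - (move y r s t : ℤ)).natAbs) h,
    sum_pair_split (fun t => ((x t : ℤ) - (y t : ℤ)).natAbs) h]
  have hmr : move y r s r = y r + 1 := by simp [move]
  have hms : move y r s s = y s - 1 := by simp [move, Ne.symm h]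
  have htail : ∑ t ∈ (Finset.univ.erase r).erase s,
      ((x t : ℤ) - (move y r s t : ℤ)).natAbs =
      ∑ t ∈ (Finset.univ.erase r).erase s, ((x t : ℤ) - (y t : ℤ)).natAbs := by
    refine Finset.sum_congr rfl fun t ht => ?_
    rw [Finset.mem_erase, Finset.mem_erase] at ht
    simp [move, ht.1, ht.2.1]
  rw [htail, hmr, hms]
  have e1 : ((x r : ℤ) - ((y r + 1 : ℕ) : ℤ)).natAbs + 1 = ((x r : ℤ) - (y r : ℤ)).natAbs := by
    omega
  have e2 : ((x s : ℤ) - ((y s - 1 : ℕ) : ℤ)).natAbs + 1 = ((x s : ℤ) - (y s : ℤ)).natAbs := by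
    omega
  omega

lemma ham_parity {x y : R → ℕ} (hxy : ∑ t, x t = ∑ t, y t) : 2 ∣ natHamming x y := by
  have key : natHamming x y + 2 * ∑ t, min (x t) (y t) = ∑ t, x t + ∑ t, y t := by
    unfold natHamming
    rw [Finset.mul_sum, ← Finset.sum_add_distrib, ← Finset.sum_add_distrib]
    exact Finset.sum_congr rfl fun t _ => by omega
  omega

end PolymatroidHelpers

/-- (Load Increase) If `x` minimizes `C_a` over `B_f(d)` and the load of the other players
on one resource `r*` increases by one unit, then some minimizer `y` of the new cost
`C_{a'}` over `B_f(d)` satisfies `H(x, y) ∈ {0, 2}`. -/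
theorem load_increase
    {R : Type*} [Fintype R] [Nonempty R] [DecidableEq R]
    (f : Finset R → ℕ) (hf : IsPolymatroidRank f)
    (a : R → ℕ) (c : R → ℕ → ℕ)
    (hmono : ∀ r, Monotone (c r))
    (hssc : ∀ r, TruncStronglySemiConvex (f {r}) (c r))
    (d : ℕ)
    (x : R → ℕ) (hx : x ∈ basePolyhedron f d)
    (hxmin : ∀ z ∈ basePolyhedron f d,
      ∑ r, c r (a r + x r) * x r ≤ ∑ r, c r (a r + z r) * z r)
    (rstar : R) (a' : R → ℕ) (ha' : a' = Function.update a rstar (a rstar + 1)) :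
    ∃ y ∈ basePolyhedron f d,
      (∀ z ∈ basePolyhedron f d,
        ∑ r, c r (a' r + y r) * y r ≤ ∑ r, c r (a' r + z r) * z r) ∧
      (natHamming x y = 0 ∨ natHamming x y = 2) := by
  classical
  have ha'r : a' rstar = a rstar + 1 := by simp [ha']
  have ha'o : ∀ t, t ≠ rstar → a' t = a t := by
    intro t ht; simp [ha', Function.update_of_ne ht]
  have ha'ge : ∀ t, a t ≤ a' t := by
    intro t
    by_cases h : t = rstar
    · subst h; omega
    · rw [ha'o t h]
  -- pick a minimizer of the new cost
  obtain ⟨n0, ⟨y0, hy0B, hy0n⟩, hmin0⟩ := (wellFounded_lt (α := ℕ)).has_min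
    {n | ∃ z ∈ basePolyhedron f d, ∑ t, c t (a' t + z t) * z t = n}
    ⟨∑ t, c t (a' t + x t) * x t, x, hx, rfl⟩
  have hy0min : ∀ z ∈ basePolyhedron f d,
      ∑ t, c t (a' t + y0 t) * y0 t ≤ ∑ t, c t (a' t + z t) * z t := by
    intro z hz
    have := hmin0 _ ⟨z, hz, rfl⟩
    omega
  -- among minimizers, pick one of minimal Hamming distance from x
  obtain ⟨m, ⟨y, hyB, hymin, hym⟩, hminm⟩ := (wellFounded_lt (α := ℕ)).has_min
    {n | ∃ z ∈ basePolyhedron f d,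
      (∀ w ∈ basePolyhedron f d,
        ∑ t, c t (a' t + z t) * z t ≤ ∑ t, c t (a' t + w t) * w t) ∧ natHamming x z = n}
    ⟨natHamming x y0, y0, hy0B, hy0min, rfl⟩
  have hyHmin : ∀ z ∈ basePolyhedron f d,
      (∀ w ∈ basePolyhedron f d,
        ∑ t, c t (a' t + z t) * z t ≤ ∑ t, c t (a' t + w t) * w t) →
      natHamming x y ≤ natHamming x z := by
    intro z hz hzmin
    have := hminm _ ⟨z, hz, hzmin, rfl⟩
    omega
  refine ⟨y, hyB, hymin, ?_⟩
  have hpar : 2 ∣ natHamming x y := ham_parity (by rw [hx.2, hyB.2])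
  have hupx : ∀ t, x t ≤ f {t} := fun t => by have := hx.1 {t}; simpa using this
  have hupy : ∀ t, y t ≤ f {t} := fun t => by have := hyB.1 {t}; simpa using this
  have hle2 : natHamming x y ≤ 2 := by
    by_contra hgt
    push_neg at hgt
    -- a generic improvement step when `y r' < x r'`
    have main2 : ∀ r', y r' < x r' →
        gi (c r') (a' r') (y r' + 1) ≤ gi (c r') (a r') (x r') → False := by
      intro r' hr' hg2
      obtain ⟨s', hs'r, hs'xy, hymv, hxmv⟩ := exchange hf hyB hx hr'
      have hopt := hxmin _ hxmv
      have hdx := cost_move_diff a c x hs'r (show 1 ≤ x r' by omega)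
      have h1 : (0 : ℤ) ≤ gi (c s') (a s') (x s' + 1) - gi (c r') (a r') (x r') := by
        have hcast : ((∑ t, c t (a t + x t) * x t : ℕ) : ℤ) ≤
            ((∑ t, c t (a t + move x s' r' t) * move x s' r' t : ℕ) : ℤ) :=
          Int.ofNat_le.mpr hopt
        rw [hdx] at hcast
        linarith
      have hdy := cost_move_diff a' c y (Ne.symm hs'r) (show 1 ≤ y s' by omega)
      have hg1 : gi (c s') (a s') (x s' + 1) ≤ gi (c s') (a' s') (y s') :=
        ssc_gi (hssc s') (by omega) (by omega) (hupy s') (ha'ge s')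
      have hcle : ∑ t, c t (a' t + move y r' s' t) * move y r' s' t ≤
          ∑ t, c t (a' t + y t) * y t := by
        have hz : ((∑ t, c t (a' t + move y r' s' t) * move y r' s' t : ℕ) : ℤ) ≤
            ((∑ t, c t (a' t + y t) * y t : ℕ) : ℤ) := by
          rw [hdy]
          linarith
        exact_mod_cast hz
      have hmin' : ∀ w ∈ basePolyhedron f d,
          ∑ t, c t (a' t + move y r' s' t) * move y r' s' t ≤
            ∑ t, c t (a' t + w t) * w t :=
        fun w hw => le_trans hcle (hymin w hw)
      have hham := ham_move (Ne.symm hs'r) hr' hs'xy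
      have := hyHmin _ hymv hmin'
      omega
    by_cases hA : x rstar < y rstar
    · -- case A : the load-increased resource gained a unit; move it back
      obtain ⟨s, hsr, hsyx, hxmv, hymv⟩ := exchange hf hx hyB hA
      have hopt := hxmin _ hxmv
      have hdx := cost_move_diff a c x (Ne.symm hsr) (show 1 ≤ x s by omega)
      have h1 : (0 : ℤ) ≤ gi (c rstar) (a rstar) (x rstar + 1) - gi (c s) (a s) (x s) := by
        have hcast : ((∑ t, c t (a t + x t) * x t : ℕ) : ℤ) ≤
            ((∑ t, c t (a t + move x rstar s t) * move x rstar s t : ℕ) : ℤ) :=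
          Int.ofNat_le.mpr hopt
        rw [hdx] at hcast
        linarith
      have hdy := cost_move_diff a' c y hsr (show 1 ≤ y rstar by omega)
      have hg1 : gi (c s) (a' s) (y s + 1) ≤ gi (c s) (a s) (x s) := by
        rw [ha'o s hsr]
        exact ssc_gi (hssc s) (by omega) (by omega) (hupx s) le_rfl
      have hg2 : gi (c rstar) (a rstar) (x rstar + 1) ≤ gi (c rstar) (a' rstar) (y rstar) := by
        rw [ha'r]
        exact ssc_gi (hssc rstar) (by omega) (by omega) (hupy rstar) (by omega)
      have hcle : ∑ t, c t (a' t + move y s rstar t) * move y s rstar t ≤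
          ∑ t, c t (a' t + y t) * y t := by
        have hz : ((∑ t, c t (a' t + move y s rstar t) * move y s rstar t : ℕ) : ℤ) ≤
            ((∑ t, c t (a' t + y t) * y t : ℕ) : ℤ) := by
          rw [hdy]
          linarith
        exact_mod_cast hz
      have hmin' : ∀ w ∈ basePolyhedron f d,
          ∑ t, c t (a' t + move y s rstar t) * move y s rstar t ≤
            ∑ t, c t (a' t + w t) * w t :=
        fun w hw => le_trans hcle (hymin w hw)
      have hham := ham_move hsr hsyx hA
      have := hyHmin _ hymv hmin'
      omega
    · by_cases hB2 : ∃ r', r' ≠ rstar ∧ y r' < x r'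
      · obtain ⟨r', hne, hr'⟩ := hB2
        refine main2 r' hr' ?_
        rw [ha'o r' hne]
        exact ssc_gi (hssc r') (by omega) (by omega) (hupx r') le_rfl
      · push_neg at hB2
        -- all the surplus of x over y is concentrated at rstar, and it is at least 2
        have hgap : y rstar + 2 ≤ x rstar := by
          have e1 : ∑ t ∈ Finset.univ.erase rstar, (y t - x t) +
              ∑ t ∈ Finset.univ.erase rstar, x t = ∑ t ∈ Finset.univ.erase rstar, y t := by
            rw [← Finset.sum_add_distrib]
            exact Finset.sum_congr rfl fun t ht => by
              have := hB2 t (Finset.ne_of_mem_erase ht); omega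
          have e2 : natHamming x y = (x rstar - y rstar) +
              ∑ t ∈ Finset.univ.erase rstar, (y t - x t) := by
            unfold natHamming
            rw [← Finset.add_sum_erase _ _ (Finset.mem_univ rstar)]
            congr 1
            · have hyx : y rstar ≤ x rstar := by omega
              omega
            · exact Finset.sum_congr rfl fun t ht => by
                have := hB2 t (Finset.ne_of_mem_erase ht); omega
          have e3 := Finset.add_sum_erase Finset.univ x (Finset.mem_univ rstar)
          have e4 := Finset.add_sum_erase Finset.univ y (Finset.mem_univ rstar)
          rw [hx.2] at e3
          rw [hyB.2] at e4
          omega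
        refine main2 rstar (by omega) ?_
        rw [ha'r]
        calc gi (c rstar) (a rstar + 1) (y rstar + 1) ≤
            gi (c rstar) (a rstar) (y rstar + 1 + 1) := gi_step (hmono rstar) _ _ (by omega)
          _ ≤ gi (c rstar) (a rstar) (x rstar) :=
            ssc_gi (hssc rstar) (by omega) (by omega) (hupx rstar) le_rfl
  omega
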